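/- Let k and n be positive integers with k < n, and let C be a linear subspace of F_2^n such that no two distinct elements of C are k-confusable. For 0 ≤ i ≤ k, let C^i = {(x_{i+1}, …, x_n, x_1, …, x_i) : (x_1, …, x_n) ∈ C} be the cyclic shift of C by i positions. Then for all 0 ≤ i < j ≤ k, dim(C^i ∩ C^j) ≤ gcd(j − i, n). -/
import Mathlib


/-- `Subseq k x` is the set of all subsequences of `x` obtained by deleting exactly `k` symbols,
i.e. all subsequences of `x` of length `|x| - k`. -/
def Subseq {α : Type*} (k : ℕ) (x : List α) : Set (List α) :=
  {y | y.Sublist x ∧ y.length + k = x.length}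

/-- Two strings are `k`-confusable if they have a common output on the `k`-deletion channel. -/
def Confusable {α : Type*} (k : ℕ) (x y : List α) : Prop :=
  (Subseq k x ∩ Subseq k y).Nonempty

/-- The linear map cyclically shifting a vector by `i` positions:
`(x₁, …, xₙ) ↦ (x_{i+1}, …, xₙ, x₁, …, x_i)`. -/
def cshiftLin (n i : ℕ) : (Fin n → ZMod 2) →ₗ[ZMod 2] (Fin n → ZMod 2) where
  toFun x := fun j => x ⟨(j.val + i) % n, Nat.mod_lt _ j.pos⟩
  map_add' _ _ := rfl
  map_smul' _ _ := rfl

lemma cshift_cshift (n a b : ℕ) (x : Fin n → ZMod 2) :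
    cshiftLin n a (cshiftLin n b x) = cshiftLin n (b + a) x := by
  funext j
  show x ⟨((j.val + a) % n + b) % n, _⟩ = x ⟨(j.val + (b + a)) % n, _⟩
  congr 1
  apply Fin.ext
  show ((j.val + a) % n + b) % n = (j.val + (b + a)) % n
  rw [Nat.mod_add_mod]
  congr 1
  omega

lemma cshift_mod (n c : ℕ) (x : Fin n → ZMod 2) :
    cshiftLin n c x = cshiftLin n (c % n) x := by
  funext j
  show x ⟨(j.val + c) % n, _⟩ = x ⟨(j.val + c % n) % n, _⟩
  congr 1
  apply Fin.ext
  show (j.val + c) % n = (j.val + c % n) % n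
  rw [Nat.add_mod_mod]

lemma cshift_self (n : ℕ) (x : Fin n → ZMod 2) : cshiftLin n n x = x := by
  funext j
  show x ⟨(j.val + n) % n, _⟩ = x j
  congr 1
  apply Fin.ext
  show (j.val + n) % n = j.val
  rw [Nat.add_mod_right, Nat.mod_eq_of_lt j.isLt]

lemma cshift_inj (n m : ℕ) (hm : m ≤ n) : Function.Injective (cshiftLin n m) := by
  intro a b h
  have := congrArg (cshiftLin n (n - m)) h
  rwa [cshift_cshift, cshift_cshift, (by omega : m + (n - m) = n), cshift_self, cshift_self] at this

lemma periodic_bound (n d : ℕ) (hn : 0 < n) (hd0 : 0 < d) (x : Fin n → ZMod 2)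
    (hx : cshiftLin n d x = x) (t : Fin n) :
    x t = x ⟨t.val % Nat.gcd d n % n, Nat.mod_lt _ hn⟩ := by
  set g := Nat.gcd d n with hg
  have hg0 : 0 < g := Nat.gcd_pos_of_pos_left n hd0
  set u : ℕ → ZMod 2 := fun t => x ⟨t % n, Nat.mod_lt _ hn⟩ with hu
  have hu_mod : ∀ s t : ℕ, s % n = t % n → u s = u t := by
    intro s t h
    simp only [hu]
    congr 1
    exact Fin.ext h
  have hu_d : ∀ t : ℕ, u (t + d) = u t := by
    intro t
    have := congrFun hx ⟨t % n, Nat.mod_lt _ hn⟩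
    simp only [hu]
    have h2 : (t + d) % n = (t % n + d) % n := by rw [Nat.mod_add_mod]
    rw [show (⟨(t+d) % n, Nat.mod_lt _ hn⟩ : Fin n) = ⟨(t % n + d) % n, Nat.mod_lt _ hn⟩ from Fin.ext h2]
    exact this
  have hu_ad : ∀ a t : ℕ, u (t + a * d) = u t := by
    intro a
    induction a with
    | zero => simp
    | succ a ih =>
      intro t
      have : t + (a + 1) * d = (t + a * d) + d := by ring
      rw [this, hu_d, ih]
  -- Bezout: find a with a * d ≡ g [MOD n]
  obtain ⟨a, ha⟩ : ∃ a : ℕ, a * d % n = g % n := by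
    set A := Nat.gcdA d n with hA
    set B := Nat.gcdB d n with hB
    have hbez : (g : ℤ) = d * A + n * B := Nat.gcd_eq_gcd_ab d n
    have hnz : (n : ℤ) ≠ 0 := by exact_mod_cast hn.ne'
    refine ⟨(A % n).toNat, ?_⟩
    have hcast : ((A % n).toNat : ℤ) = A % n := Int.toNat_of_nonneg (Int.emod_nonneg A hnz)
    have key : ((A % n).toNat : ℤ) * d % n = (g : ℤ) % n := by
      rw [hcast]
      conv_lhs => rw [Int.mul_emod, Int.emod_emod_of_dvd _ dvd_rfl, ← Int.mul_emod]
      have h2 : A * (d:ℤ) = g + (-B) * n := by linarith [hbez]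
      rw [h2, Int.add_mul_emod_self_right]
    have : ((((A % n).toNat) * d % n : ℕ) : ℤ) = ((g % n : ℕ) : ℤ) := by
      push_cast
      exact key
    exact_mod_cast this
  have hu_g : ∀ t : ℕ, u (t + g) = u t := by
    intro t
    have h1 : (t + g) % n = (t + a * d) % n :=
      Nat.ModEq.add_left t (ha.symm : Nat.ModEq n g (a * d))
    rw [hu_mod _ _ h1, hu_ad]
  have hu_qg : ∀ q t : ℕ, u (t + q * g) = u t := by
    intro q
    induction q with
    | zero => simp
    | succ q ih =>
      intro t
      have : t + (q + 1) * g = (t + q * g) + g := by ring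
      rw [this, hu_g, ih]
  have h1 : x t = u t.val := by
    simp only [hu]
    congr 1
    exact Fin.ext (Nat.mod_eq_of_lt t.isLt).symm
  have h2 : u t.val = u (t.val % g) := by
    conv_lhs => rw [show t.val = t.val % g + (t.val / g) * g by
      rw [Nat.mul_comm, Nat.mod_add_div]]
    exact hu_qg _ _
  rw [h1, h2]

lemma drop_eq_take_cshift (n d : ℕ) (hd : d ≤ n) (y : Fin n → ZMod 2) :
    (List.ofFn y).drop d = (List.ofFn (cshiftLin n d y)).take (n - d) := by
  apply List.ext_getElem
  · simp [Nat.min_eq_left]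
  · intro m h1 h2
    rw [List.getElem_drop, List.getElem_take, List.getElem_ofFn, List.getElem_ofFn]
    have hm : m < n - d := by simpa using h2
    show y _ = y ⟨(m + d) % n, _⟩
    congr 1
    apply Fin.ext
    show d + m = (m + d) % n
    rw [Nat.mod_eq_of_lt (by omega)]
    omega

lemma confusable_cshift (n k d : ℕ) (hd : d ≤ k) (hkn : k < n) (y : Fin n → ZMod 2) :
    Confusable k (List.ofFn y) (List.ofFn (cshiftLin n d y)) := by
  set w : List (ZMod 2) := (List.ofFn y).drop d with hw
  have hwlen : w.length = n - d := by simp [hw]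
  refine ⟨w.take (n - k), ⟨?_, ?_⟩, ?_, ?_⟩
  · exact (List.take_sublist (n-k) w).trans (List.drop_sublist d (List.ofFn y))
  · show (w.take (n-k)).length + k = (List.ofFn y).length
    simp [hwlen]
    omega
  · rw [hw, drop_eq_take_cshift n d (by omega) y]
    exact (List.take_sublist (n-k) _).trans (List.take_sublist (n-d) (List.ofFn (cshiftLin n d y)))
  · show (w.take (n-k)).length + k = (List.ofFn (cshiftLin n d y)).length
    simp [hwlen]
    omega

theorem stmt_16 (k n : ℕ) (hk : 0 < k) (hkn : k < n)
    (C : Submodule (ZMod 2) (Fin n → ZMod 2))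
    (hC : ∀ x ∈ C, ∀ y ∈ C, x ≠ y → ¬ Confusable k (List.ofFn x) (List.ofFn y))
    (i j : ℕ) (hij : i < j) (hjk : j ≤ k) :
    Module.finrank (ZMod 2) ↥(C.map (cshiftLin n i) ⊓ C.map (cshiftLin n j)) ≤
      Nat.gcd (j - i) n := by
  have hn : 0 < n := by omega
  set d := j - i with hdd
  have hd0 : 0 < d := by omega
  have hdn : d < n := by omega
  set g := Nat.gcd d n with hg
  have hg0 : 0 < g := Nat.gcd_pos_of_pos_left n hd0
  have hgn : g ≤ n := Nat.le_of_dvd hn (Nat.gcd_dvd_right d n)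
  set W := C.map (cshiftLin n i) ⊓ C.map (cshiftLin n j) with hW
  set P := LinearMap.ker (cshiftLin n d - LinearMap.id) with hP
  have hinj : Function.Injective (cshiftLin n (n - j)) := cshift_inj n (n - j) (by omega)
  have hWP : W.map (cshiftLin n (n - j)) ≤ P := by
    rintro _ ⟨v, hv, rfl⟩
    obtain ⟨⟨x, hx, hxv⟩, ⟨y, hy, hyv⟩⟩ := hv
    have h1 : cshiftLin n (n - j) v = y := by
      rw [← hyv, cshift_cshift, (by omega : j + (n - j) = n), cshift_self]
    have h2 : cshiftLin n d y = x := by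
      have e1 : cshiftLin n (n - i) v = x := by
        rw [← hxv, cshift_cshift, (by omega : i + (n - i) = n), cshift_self]
      rw [← hyv, cshift_cshift] at e1
      rw [show j + (n - i) = n + d by omega] at e1
      rw [cshift_mod, Nat.add_mod_left, Nat.mod_eq_of_lt hdn] at e1
      exact e1
    have hconf := confusable_cshift n k d (by omega) hkn y
    rw [h2] at hconf
    have hxy : y = x := by
      by_contra hne
      exact hC y hy x hx hne hconf
    rw [h1, LinearMap.mem_ker, LinearMap.sub_apply, LinearMap.id_apply, h2, ← hxy, sub_self]
  have hPg : Module.finrank (ZMod 2) P ≤ g := by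
    let φ : P →ₗ[ZMod 2] (Fin g → ZMod 2) :=
      { toFun := fun x m => x.1 ⟨m.val, lt_of_lt_of_le m.isLt hgn⟩
        map_add' := fun _ _ => rfl
        map_smul' := fun _ _ => rfl }
    have hφ : Function.Injective φ := by
      rw [injective_iff_map_eq_zero]
      rintro ⟨x, hxP⟩ h0
      have hfix : cshiftLin n d x = x := by
        rw [hP, LinearMap.mem_ker, LinearMap.sub_apply, LinearMap.id_apply, sub_eq_zero] at hxP
        exact hxP
      apply Subtype.ext
      funext t
      have hper := periodic_bound n d hn hd0 x hfix t
      have h4 := congrFun h0 ⟨t.val % g, Nat.mod_lt _ hg0⟩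
      have h3 : t.val % g % n = t.val % g := Nat.mod_eq_of_lt (lt_of_lt_of_le (Nat.mod_lt _ hg0) hgn)
      show x t = 0
      rw [hper]
      rw [show (⟨t.val % g % n, Nat.mod_lt _ hn⟩ : Fin n)
            = ⟨t.val % g, lt_of_lt_of_le (Nat.mod_lt _ hg0) hgn⟩ from Fin.ext h3]
      exact h4
    have h5 := LinearMap.finrank_le_finrank_of_injective hφ
    simpa [Module.finrank_pi] using h5
  calc Module.finrank (ZMod 2) W
      = Module.finrank (ZMod 2) (W.map (cshiftLin n (n - j))) :=
        (Submodule.equivMapOfInjective (cshiftLin n (n - j)) hinj W).finrank_eq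
    _ ≤ Module.finrank (ZMod 2) P := Submodule.finrank_mono hWP
    _ ≤ g := hPg
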